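/- For κ ∈ [0,1), define 𝒞(κ) = (∫_{-π}^{π} cos²θ (1 - κ² cos²θ)^{-3/2} dθ) / (∫_{-π}^{π} (1 - κ² cos²θ)^{-3/2} dθ). Then 𝒞 is (weakly) increasing on [0,1); more precisely, writing the ratio in the substituted form U(a)/V(a) with U(a) = ∫_{-π}^{π} ((1+cos φ)/2)(1 + a cos φ)^{-3/2} dφ and V(a) = ∫_{-π}^{π} (1 + a cos φ)^{-3/2} dφ for a ∈ (-1,1), one has U'(a)V(a) - U(a)V'(a) ≤ 0, i.e., U/V is nonincreasing in a. -/

import Mathlib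

/-!
The substitution φ = 2θ turns cos²θ into (1 + cos φ)/2 and 1 - κ² cos²θ into
(1 - κ²/2)(1 + a cos φ) with a = -κ²/(2 - κ²), which decreases in κ ∈ [0, 1) and stays in (-1, 0];
hence 𝒞(κ) = U(a)/V(a) and it suffices that U/V is antitone on (-1, 1). With the moments
Iₖ = ∫ cosᵏφ (1 + a cos φ)^{-5/2} dφ, differentiating under the integral sign and splitting
(1 + a cos φ)^{-3/2} = (1 + a cos φ)(1 + a cos φ)^{-5/2} gives U'V - UV' = -(3/4)(I₀I₂ - I₁²),
which is nonpositive by the Cauchy–Schwarz inequality for the positive weight (1 + a cos φ)^{-5/2}.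
-/

open Real intervalIntegral Set

/-- `𝒞(κ)`, the normalized second trigonometric moment of the Palm angle density. -/
noncomputable def Ccal (κ : ℝ) : ℝ :=
  (∫ θ in (-π)..π, Real.cos θ ^ 2 * (1 - κ ^ 2 * Real.cos θ ^ 2) ^ (-(3 : ℝ) / 2)) /
    (∫ θ in (-π)..π, (1 - κ ^ 2 * Real.cos θ ^ 2) ^ (-(3 : ℝ) / 2))

/-- `U(a) = ∫_{-π}^{π} ((1+cos φ)/2)(1 + a cos φ)^{-3/2} dφ`. -/
noncomputable def Ufun (a : ℝ) : ℝ :=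
  ∫ φ in (-π)..π, ((1 + Real.cos φ) / 2) * (1 + a * Real.cos φ) ^ (-(3 : ℝ) / 2)

/-- `V(a) = ∫_{-π}^{π} (1 + a cos φ)^{-3/2} dφ`. -/
noncomputable def Vfun (a : ℝ) : ℝ :=
  ∫ φ in (-π)..π, (1 + a * Real.cos φ) ^ (-(3 : ℝ) / 2)

theorem hasDerivAt_intervalIntegral_of_continuousOn {E : Type*} [NormedAddCommGroup E]
    [NormedSpace ℝ E] {F F' : ℝ → ℝ → E} {s : Set ℝ} {x₀ : ℝ} (hs : IsOpen s)
    (hx₀ : x₀ ∈ s)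
    (hF : ContinuousOn (Function.uncurry F) (s ×ˢ univ))
    (hF' : ContinuousOn (Function.uncurry F') (s ×ˢ univ))
    (hderiv : ∀ x ∈ s, ∀ t, HasDerivAt (F · t) (F' x t) x) (a b : ℝ) :
    HasDerivAt (fun x => ∫ t in a..b, F x t) (∫ t in a..b, F' x₀ t) x₀ := by
  have hslice : ∀ {G : ℝ → ℝ → E}, ContinuousOn (Function.uncurry G) (s ×ˢ univ) →
      ∀ x ∈ s, Continuous (G x) := fun hG x hx =>
    hG.comp_continuous (Continuous.prodMk_right x) fun t => ⟨hx, mem_univ t⟩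
  obtain ⟨ε, hε, hball⟩ := Metric.isOpen_iff.1 hs x₀ hx₀
  have hK : Metric.closedBall x₀ (ε / 2) ×ˢ uIcc a b ⊆ s ×ˢ univ :=
    prod_mono ((Metric.closedBall_subset_ball (half_lt_self hε)).trans hball) (subset_univ _)
  obtain ⟨C, hC⟩ := ((isCompact_closedBall x₀ (ε / 2)).prod
    isCompact_uIcc).exists_bound_of_continuousOn (hF'.mono hK)
  refine (hasDerivAt_integral_of_dominated_loc_of_deriv_le (bound := fun _ => C)
    (Metric.closedBall_mem_nhds x₀ (half_pos hε)) ?_ ((hslice hF x₀ hx₀).intervalIntegrable a b)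
    (hslice hF' x₀ hx₀).aestronglyMeasurable ?_ intervalIntegrable_const ?_).2
  · filter_upwards [hs.mem_nhds hx₀] with x hx
    exact (hslice hF x hx).aestronglyMeasurable
  · exact Filter.Eventually.of_forall fun t ht x hx => hC (x, t) ⟨hx, uIoc_subset_uIcc ht⟩
  · exact Filter.Eventually.of_forall fun t _ x hx =>
      hderiv x (hball (Metric.closedBall_subset_ball (half_lt_self hε) hx)) t

theorem sq_intervalIntegral_mul_le {f w : ℝ → ℝ} {a b : ℝ} (hab : a ≤ b) (hf : Continuous f)
    (hw : Continuous w) (hw0 : ∀ x, 0 ≤ w x) :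
    (∫ x in a..b, f x * w x) ^ 2 ≤ (∫ x in a..b, w x) * ∫ x in a..b, f x ^ 2 * w x := by
  have hquad : ∀ t : ℝ, 0 ≤ (∫ x in a..b, f x ^ 2 * w x) * (t * t)
      + (-2 * ∫ x in a..b, f x * w x) * t + ∫ x in a..b, w x := by
    intro t
    calc (0 : ℝ) ≤ ∫ x in a..b, (t * f x - 1) ^ 2 * w x :=
          integral_nonneg hab fun x _ => mul_nonneg (sq_nonneg _) (hw0 x)
      _ = ∫ x in a..b, (t * t * (f x ^ 2 * w x) + (-2 * t) * (f x * w x) + w x) :=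
          integral_congr fun x _ => by ring
      _ = _ := by
          have hint : ∀ g : ℝ → ℝ, Continuous g → IntervalIntegrable g MeasureTheory.volume a b :=
            fun g hg => hg.intervalIntegrable a b
          rw [integral_add (hint _ (by fun_prop)) (hint w hw),
            integral_add (hint _ (by fun_prop)) (hint _ (by fun_prop)), integral_const_mul,
            integral_const_mul]
          ring
  have := discrim_le_zero hquad
  rw [discrim] at this
  nlinarith

theorem Function.Periodic.intervalIntegral_comp_int_mul {E : Type*} [NormedAddCommGroup E]
    [NormedSpace ℝ E] {h : ℝ → E} {T : ℝ} (hper : Function.Periodic h T)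
    (hint : ∀ t₁ t₂, IntervalIntegrable h MeasureTheory.volume t₁ t₂) {n : ℤ} (hn : n ≠ 0)
    (t : ℝ) :
    ∫ x in t..t + T, h (n * x) = ∫ x in t..t + T, h x := by
  rw [integral_comp_mul_left h (Int.cast_ne_zero.2 hn),
    show (n : ℝ) * (t + T) = n * t + n • T by rw [zsmul_eq_mul]; ring,
    hper.intervalIntegral_add_zsmul_eq n _ hint, hper.intervalIntegral_add_eq _ t,
    ← Int.cast_smul_eq_zsmul ℝ, smul_smul, inv_mul_cancel₀ (Int.cast_ne_zero.2 hn), one_smul]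

lemma one_add_mul_cos_pos {a : ℝ} (ha : a ∈ Ioo (-1 : ℝ) 1) (φ : ℝ) : 0 < 1 + a * cos φ := by
  have hprod : |a * cos φ| < 1 := by
    rw [abs_mul]
    nlinarith [abs_cos_le_one φ, abs_nonneg a, abs_lt.2 ⟨ha.1, ha.2⟩]
  linarith [neg_abs_le (a * cos φ)]

lemma continuousOn_cos_pow_mul_rpow (k : ℕ) (p : ℝ) :
    ContinuousOn (fun z : ℝ × ℝ => cos z.2 ^ k * (1 + z.1 * cos z.2) ^ p)
      (Ioo (-1 : ℝ) 1 ×ˢ univ) :=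
  (by fun_prop : Continuous fun z : ℝ × ℝ => cos z.2 ^ k).continuousOn.mul
    ((by fun_prop : Continuous fun z : ℝ × ℝ => 1 + z.1 * cos z.2).continuousOn.rpow_const
      fun z hz => Or.inl (one_add_mul_cos_pos hz.1 z.2).ne')

lemma continuous_cos_pow_mul_rpow {a : ℝ} (ha : a ∈ Ioo (-1 : ℝ) 1) (k : ℕ) (p : ℝ) :
    Continuous fun φ => cos φ ^ k * (1 + a * cos φ) ^ p :=
  (continuousOn_cos_pow_mul_rpow k p).comp_continuous (Continuous.prodMk_right a)
    fun φ => ⟨ha, mem_univ φ⟩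

noncomputable def cosMoment (p a : ℝ) (k : ℕ) : ℝ :=
  ∫ φ in (-π)..π, cos φ ^ k * (1 + a * cos φ) ^ p

lemma hasDerivAt_cosMoment {a : ℝ} (ha : a ∈ Ioo (-1 : ℝ) 1) (p : ℝ) (k : ℕ) :
    HasDerivAt (cosMoment p · k) (p * cosMoment (p - 1) a (k + 1)) a := by
  rw [cosMoment, ← integral_const_mul]
  refine hasDerivAt_intervalIntegral_of_continuousOn
    (F := fun x φ => cos φ ^ k * (1 + x * cos φ) ^ p)
    (F' := fun x φ => p * (cos φ ^ (k + 1) * (1 + x * cos φ) ^ (p - 1))) isOpen_Ioo ha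
    (continuousOn_cos_pow_mul_rpow k p)
    (continuousOn_const.mul (continuousOn_cos_pow_mul_rpow (k + 1) (p - 1))) (fun x hx φ => ?_) _ _
  exact ((((hasDerivAt_mul_const (cos φ)).const_add 1).rpow_const (p := p)
    (Or.inl (one_add_mul_cos_pos hx φ).ne')).const_mul (cos φ ^ k)).congr_deriv (by ring)

lemma cosMoment_eq_add {a : ℝ} (ha : a ∈ Ioo (-1 : ℝ) 1) (p : ℝ) (k : ℕ) :
    cosMoment p a k = cosMoment (p - 1) a k + a * cosMoment (p - 1) a (k + 1) := by
  rw [cosMoment, cosMoment, cosMoment, ← integral_const_mul,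
    ← integral_add ((continuous_cos_pow_mul_rpow ha k _).intervalIntegrable _ _)
      (((continuous_cos_pow_mul_rpow ha (k + 1) _).intervalIntegrable _ _).const_mul a)]
  refine integral_congr fun φ _ => ?_
  have hsplit := rpow_add (one_add_mul_cos_pos ha φ) 1 (p - 1)
  rw [add_sub_cancel, rpow_one] at hsplit
  rw [hsplit]
  ring

lemma sq_cosMoment_one_le {a : ℝ} (ha : a ∈ Ioo (-1 : ℝ) 1) (p : ℝ) :
    cosMoment p a 1 ^ 2 ≤ cosMoment p a 0 * cosMoment p a 2 := by
  simpa [cosMoment] using sq_intervalIntegral_mul_le (neg_le_self pi_pos.le) continuous_cos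
    (continuous_cos_pow_mul_rpow ha 0 p) fun φ => by
      simpa using (rpow_pos_of_pos (one_add_mul_cos_pos ha φ) p).le

lemma Vfun_eq_cosMoment (a : ℝ) : Vfun a = cosMoment (-(3 : ℝ) / 2) a 0 := by
  simp [Vfun, cosMoment]

lemma Ufun_eq_cosMoment {a : ℝ} (ha : a ∈ Ioo (-1 : ℝ) 1) :
    Ufun a = (cosMoment (-(3 : ℝ) / 2) a 0 + cosMoment (-(3 : ℝ) / 2) a 1) / 2 := by
  rw [cosMoment, cosMoment,
    ← integral_add ((continuous_cos_pow_mul_rpow ha 0 _).intervalIntegrable _ _)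
      ((continuous_cos_pow_mul_rpow ha 1 _).intervalIntegrable _ _), ← integral_div]
  exact integral_congr fun φ _ => by ring

lemma hasDerivAt_Vfun {a : ℝ} (ha : a ∈ Ioo (-1 : ℝ) 1) :
    HasDerivAt Vfun (-(3 : ℝ) / 2 * cosMoment (-(3 : ℝ) / 2 - 1) a 1) a := by
  rw [funext Vfun_eq_cosMoment]
  exact hasDerivAt_cosMoment ha _ 0

lemma hasDerivAt_Ufun {a : ℝ} (ha : a ∈ Ioo (-1 : ℝ) 1) :
    HasDerivAt Ufun (-(3 : ℝ) / 4 *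
      (cosMoment (-(3 : ℝ) / 2 - 1) a 1 + cosMoment (-(3 : ℝ) / 2 - 1) a 2)) a := by
  have hU : Ufun =ᶠ[nhds a] fun x =>
      (cosMoment (-(3 : ℝ) / 2) x 0 + cosMoment (-(3 : ℝ) / 2) x 1) / 2 := by
    filter_upwards [isOpen_Ioo.mem_nhds ha] with x hx using Ufun_eq_cosMoment hx
  refine ((((hasDerivAt_cosMoment ha _ 0).add (hasDerivAt_cosMoment ha _ 1)).div_const
    2).congr_of_eventuallyEq hU).congr_deriv ?_
  ring

lemma deriv_Ufun_mul_Vfun_sub {a : ℝ} (ha : a ∈ Ioo (-1 : ℝ) 1) :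
    deriv Ufun a * Vfun a - Ufun a * deriv Vfun a =
      -(3 / 4) * (cosMoment (-(3 : ℝ) / 2 - 1) a 0 * cosMoment (-(3 : ℝ) / 2 - 1) a 2 -
        cosMoment (-(3 : ℝ) / 2 - 1) a 1 ^ 2) := by
  rw [(hasDerivAt_Ufun ha).deriv, (hasDerivAt_Vfun ha).deriv, Ufun_eq_cosMoment ha,
    Vfun_eq_cosMoment, cosMoment_eq_add ha (-(3 : ℝ) / 2) 0,
    cosMoment_eq_add ha (-(3 : ℝ) / 2) 1]
  ring

lemma deriv_Ufun_mul_Vfun_sub_nonpos {a : ℝ} (ha : a ∈ Ioo (-1 : ℝ) 1) :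
    deriv Ufun a * Vfun a - Ufun a * deriv Vfun a ≤ 0 := by
  rw [deriv_Ufun_mul_Vfun_sub ha]
  nlinarith [sq_cosMoment_one_le ha (-(3 : ℝ) / 2 - 1)]

lemma Vfun_pos {a : ℝ} (ha : a ∈ Ioo (-1 : ℝ) 1) : 0 < Vfun a := by
  rw [Vfun_eq_cosMoment]
  refine intervalIntegral_pos_of_pos ((continuous_cos_pow_mul_rpow ha 0 _).intervalIntegrable _ _)
    (fun φ => ?_) (neg_lt_self pi_pos)
  simpa using rpow_pos_of_pos (one_add_mul_cos_pos ha φ) _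

lemma antitoneOn_Ufun_div_Vfun : AntitoneOn (fun a => Ufun a / Vfun a) (Ioo (-1 : ℝ) 1) := by
  have hderiv : ∀ a ∈ Ioo (-1 : ℝ) 1, HasDerivAt (fun x => Ufun x / Vfun x)
      ((deriv Ufun a * Vfun a - Ufun a * deriv Vfun a) / Vfun a ^ 2) a := fun a ha => by
    rw [(hasDerivAt_Ufun ha).deriv, (hasDerivAt_Vfun ha).deriv]
    exact (hasDerivAt_Ufun ha).div (hasDerivAt_Vfun ha) (Vfun_pos ha).ne'
  have hdiff : DifferentiableOn ℝ (fun x => Ufun x / Vfun x) (Ioo (-1 : ℝ) 1) :=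
    fun a ha => (hderiv a ha).differentiableAt.differentiableWithinAt
  refine antitoneOn_of_deriv_nonpos (convex_Ioo _ _) hdiff.continuousOn
    (by rwa [interior_Ioo]) fun a ha => ?_
  rw [interior_Ioo] at ha
  rw [(hderiv a ha).deriv]
  exact div_nonpos_of_nonpos_of_nonneg (deriv_Ufun_mul_Vfun_sub_nonpos ha) (sq_nonneg _)

noncomputable def aOfKappa (κ : ℝ) : ℝ := -κ ^ 2 / (2 - κ ^ 2)

lemma aOfKappa_mem {κ : ℝ} (hκ : κ ∈ Ico (0 : ℝ) 1) : aOfKappa κ ∈ Ioo (-1 : ℝ) 1 := by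
  have hden : 0 < 2 - κ ^ 2 := by nlinarith [hκ.1, hκ.2]
  rw [aOfKappa, mem_Ioo, lt_div_iff₀ hden, div_lt_iff₀ hden]
  constructor <;> nlinarith [hκ.1, hκ.2]

lemma antitoneOn_aOfKappa : AntitoneOn aOfKappa (Ico (0 : ℝ) 1) := by
  intro κ₁ h₁ κ₂ h₂ h
  have hden₁ : 0 < 2 - κ₁ ^ 2 := by nlinarith [h₁.1, h₁.2]
  have hden₂ : 0 < 2 - κ₂ ^ 2 := by nlinarith [h₂.1, h₂.2]
  rw [aOfKappa, aOfKappa, div_le_div_iff₀ hden₂ hden₁]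
  nlinarith [h₁.1, mul_le_mul h h h₁.1 (h₁.1.trans h)]

lemma one_sub_mul_cos_sq {κ : ℝ} (hκ : κ ^ 2 ≠ 2) (θ : ℝ) :
    1 - κ ^ 2 * cos θ ^ 2 = (1 - κ ^ 2 / 2) * (1 + aOfKappa κ * cos (2 * θ)) := by
  rw [aOfKappa, cos_two_mul]
  field_simp [sub_ne_zero.2 hκ.symm]
  ring

lemma integral_mul_one_sub_mul_cos_sq_rpow {κ : ℝ} (hκ : κ ∈ Ico (0 : ℝ) 1) {g : ℝ → ℝ}
    (hg : Continuous g) (hper : Function.Periodic g (2 * π)) (p : ℝ) :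
    ∫ θ in (-π)..π, g (2 * θ) * (1 - κ ^ 2 * cos θ ^ 2) ^ p =
      (1 - κ ^ 2 / 2) ^ p * ∫ φ in (-π)..π, g φ * (1 + aOfKappa κ * cos φ) ^ p := by
  have ha := aOfKappa_mem hκ
  have hc : 0 ≤ 1 - κ ^ 2 / 2 := by nlinarith [hκ.1, hκ.2]
  have hper' : Function.Periodic (fun φ => g φ * (1 + aOfKappa κ * cos φ) ^ p) (2 * π) :=
    fun φ => by simp only [hper φ, cos_periodic φ]
  have hint : ∀ t₁ t₂, IntervalIntegrable (fun φ => g φ * (1 + aOfKappa κ * cos φ) ^ p)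
      MeasureTheory.volume t₁ t₂ :=
    (hg.mul (by simpa using continuous_cos_pow_mul_rpow ha 0 p)).intervalIntegrable
  have hsub := hper'.intervalIntegral_comp_int_mul hint two_ne_zero (-π)
  rw [show -π + 2 * π = π by ring] at hsub
  push_cast at hsub
  rw [← hsub, ← integral_const_mul]
  refine integral_congr fun θ _ => ?_
  rw [one_sub_mul_cos_sq (by nlinarith [hκ.1, hκ.2]) θ,
    mul_rpow hc (one_add_mul_cos_pos ha _).le]
  ring

lemma Ccal_eq_Ufun_div_Vfun {κ : ℝ} (hκ : κ ∈ Ico (0 : ℝ) 1) :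
    Ccal κ = Ufun (aOfKappa κ) / Vfun (aOfKappa κ) := by
  have hnum := integral_mul_one_sub_mul_cos_sq_rpow hκ (g := fun φ => (1 + cos φ) / 2)
    (by fun_prop) (fun φ => by simp only [cos_periodic φ]) (-(3 : ℝ) / 2)
  have hden := integral_mul_one_sub_mul_cos_sq_rpow hκ (g := fun _ => 1)
    continuous_const (fun _ => rfl) (-(3 : ℝ) / 2)
  simp only [one_mul] at hnum hden
  have hc : 0 < (1 - κ ^ 2 / 2) ^ (-(3 : ℝ) / 2) := rpow_pos_of_pos (by nlinarith [hκ.1, hκ.2]) _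
  rw [Ccal, ← mul_div_mul_left (Ufun _) (Vfun _) hc.ne', Ufun, Vfun, ← hnum, ← hden]
  congr 1
  refine integral_congr fun θ _ => ?_
  rw [cos_sq θ]
  ring

/-- `𝒞` is weakly increasing on `[0,1)`; more precisely, in the substituted
form `U/V` one has `U'V - UV' ≤ 0` on `(-1,1)`, i.e. `U/V` is nonincreasing in `a`. -/
theorem Ccal_monotone :
    MonotoneOn Ccal (Set.Ico (0 : ℝ) 1) ∧
    (∀ a ∈ Set.Ioo (-1 : ℝ) 1,
      deriv Ufun a * Vfun a - Ufun a * deriv Vfun a ≤ 0) ∧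
    AntitoneOn (fun a => Ufun a / Vfun a) (Set.Ioo (-1 : ℝ) 1) := by
  refine ⟨fun κ₁ h₁ κ₂ h₂ h => ?_, fun a ha => deriv_Ufun_mul_Vfun_sub_nonpos ha,
    antitoneOn_Ufun_div_Vfun⟩
  rw [Ccal_eq_Ufun_div_Vfun h₁, Ccal_eq_Ufun_div_Vfun h₂]
  exact antitoneOn_Ufun_div_Vfun (aOfKappa_mem h₂) (aOfKappa_mem h₁) (antitoneOn_aOfKappa h₁ h₂ h)
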